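/- In an ε-additive perturbation stable k-means instance, for any two optimal clusters C_i, C_j with means μ_i, μ_j and any point x ∈ C_i ∪ C_j, one has ‖(x−p)_{(V)}‖ ≤ (1/ε)(‖(x−p)_{(u)}‖ − εD_{i,j}), where u is the unit intermean direction, V = u^⊥, p the midpoint of the means, and D_{i,j} the distance between the means. -/

import Mathlib

open RealInnerProductSpace Finset

open Classical in
/-- The mean of cluster `j` in the clustering `c` of the points `x`. -/
noncomputable def clusterMean {d n k : ℕ} (x : Fin n → EuclideanSpace ℝ (Fin d))
    (c : Fin n → Fin k) (j : Fin k) : EuclideanSpace ℝ (Fin d) :=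
  (((Finset.univ.filter (fun i => c i = j)).card : ℝ))⁻¹ •
    ∑ i ∈ Finset.univ.filter (fun i => c i = j), x i

/-- The `k`-means cost of the clustering `c` of the points `x` (each cluster with its mean). -/
noncomputable def kmeansCost {d n k : ℕ} (x : Fin n → EuclideanSpace ℝ (Fin d))
    (c : Fin n → Fin k) : ℝ :=
  ∑ i, ‖x i - clusterMean x c (c i)‖ ^ 2

/-- `c` is an optimal `k`-means clustering of `x`. -/
def IsOptimalClustering {d n k : ℕ} (x : Fin n → EuclideanSpace ℝ (Fin d))
    (c : Fin n → Fin k) : Prop :=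
  ∀ c' : Fin n → Fin k, kmeansCost x c ≤ kmeansCost x c'

/-- `c` is the unique optimal clustering of `x` (up to relabeling of clusters). -/
def IsUniqueOptimalClustering {d n k : ℕ} (x : Fin n → EuclideanSpace ℝ (Fin d))
    (c : Fin n → Fin k) : Prop :=
  IsOptimalClustering x c ∧
    ∀ c' : Fin n → Fin k, IsOptimalClustering x c' → ∀ i j, (c' i = c' j ↔ c i = c j)

/-- `x` with optimal clustering `c` is `ε`-additive perturbation stable with scale `D`:
after moving every point a distance at most `ε·D`, `c` remains an optimal clustering. -/
def IsAPS {d n k : ℕ} (ε D : ℝ) (x : Fin n → EuclideanSpace ℝ (Fin d))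
    (c : Fin n → Fin k) : Prop :=
  ∀ x' : Fin n → EuclideanSpace ℝ (Fin d),
    (∀ i, ‖x' i - x i‖ ≤ ε * D) → IsOptimalClustering x' c

/-!
If a point of `C_i` violated the bound, move it by `ε D` along `-u`, compensate inside `C_i` so that
`μ_i` stays put, and shift all of `C_j` by at most `ε D` towards the moved point. With `h = D_{i,j}/2`
and the moved point written `p + z`, the squared distances to `μ_j` and `μ_i` differ by `4 h ⟪z, u⟫`,
which the violation makes smaller than `2 ε D` times the distance to `μ_i`. Hence the moved point is
strictly closer to the shifted mean of `C_j` than to `μ_i`, so reassigning it lowers the cost of the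
perturbed instance, contradicting stability. Points of `C_j` are handled by exchanging `i` and `j`,
which flips `u`.
-/

section Geometry

variable {E : Type*} [NormedAddCommGroup E] [InnerProductSpace ℝ E]

theorem sum_norm_sub_mean_sq_le {ι : Type*} (s : Finset ι) (y : ι → E) (b : E) :
    ∑ l ∈ s, ‖y l - (#s : ℝ)⁻¹ • ∑ m ∈ s, y m‖ ^ 2 ≤ ∑ l ∈ s, ‖y l - b‖ ^ 2 := by
  rcases s.eq_empty_or_nonempty with rfl | hs
  · simp
  set μ := (#s : ℝ)⁻¹ • ∑ m ∈ s, y m with hμ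
  have hsum : ∑ l ∈ s, (y l - μ) = 0 := by
    rw [sum_sub_distrib, sum_const, ← Nat.cast_smul_eq_nsmul ℝ, hμ,
      smul_inv_smul₀ (Nat.cast_ne_zero.2 hs.card_pos.ne'), sub_self]
  have hsplit : ∑ l ∈ s, ‖y l - b‖ ^ 2 = ∑ l ∈ s, ‖y l - μ‖ ^ 2 + #s * ‖μ - b‖ ^ 2 :=
    calc ∑ l ∈ s, ‖y l - b‖ ^ 2
        = ∑ l ∈ s, (‖y l - μ‖ ^ 2 + 2 * ⟪y l - μ, μ - b⟫ + ‖μ - b‖ ^ 2) :=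
          sum_congr rfl fun l _ => by rw [← norm_add_sq_real, sub_add_sub_cancel]
      _ = ∑ l ∈ s, ‖y l - μ‖ ^ 2 + #s * ‖μ - b‖ ^ 2 := by
          rw [sum_add_distrib, sum_add_distrib, ← mul_sum, ← sum_inner, hsum, inner_zero_left,
            sum_const, nsmul_eq_mul]
          ring
  rw [hsplit]
  exact le_add_of_nonneg_right (by positivity)

theorem exists_norm_le_norm_sub_le_max (z : E) {δ : ℝ} (hδ : 0 ≤ δ) :
    ∃ q : E, ‖q‖ ≤ δ ∧ ‖z - q‖ ≤ max (‖z‖ - δ) 0 := by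
  rcases le_or_gt ‖z‖ δ with hz | hz
  · exact ⟨z, hz, by simp⟩
  have hz0 : 0 < ‖z‖ := hδ.trans_lt hz
  refine ⟨(δ / ‖z‖) • z, ?_, le_max_of_le_left (le_of_eq ?_)⟩
  · rw [norm_smul, Real.norm_of_nonneg (by positivity), div_mul_cancel₀ _ hz0.ne']
  · rw [show z - (δ / ‖z‖) • z = (1 - δ / ‖z‖) • z by module, norm_smul,
      Real.norm_of_nonneg (sub_nonneg.2 ((div_le_one hz0).2 hz.le)), sub_mul,
      div_mul_cancel₀ _ hz0.ne', one_mul]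

theorem norm_sub_smul_sq_of_norm_eq_one {u : E} (hu : ‖u‖ = 1) (z : E) (t : ℝ) :
    ‖z - t • u‖ ^ 2 = ‖z - ⟪z, u⟫ • u‖ ^ 2 + (⟪z, u⟫ - t) ^ 2 := by
  have horth : ⟪z - ⟪z, u⟫ • u, (⟪z, u⟫ - t) • u⟫ = 0 := by
    rw [inner_smul_right, inner_sub_left, real_inner_smul_left, real_inner_self_eq_norm_sq, hu]
    ring
  have hz : z - t • u = (z - ⟪z, u⟫ • u) + (⟪z, u⟫ - t) • u := by module
  rw [hz, norm_add_sq_real, horth, norm_smul, hu, mul_one, Real.norm_eq_abs, sq_abs]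
  ring

theorem max_norm_sub_smul_sub_lt {u z : E} {h ε δ : ℝ} (hu : ‖u‖ = 1) (hh : 0 < h)
    (hε : 0 ≤ ε) (hδ : 2 * h * ε ≤ δ) (hlt : ⟪z, u⟫ - δ < ε * ‖z - ⟪z, u⟫ • u‖) :
    max (‖z - (δ - h) • u‖ - δ) 0 < ‖z - (δ + h) • u‖ := by
  set v := ‖z - ⟪z, u⟫ • u‖
  set g := ‖z - (δ - h) • u‖
  set G := ‖z - (δ + h) • u‖
  have hg : g ^ 2 = v ^ 2 + (⟪z, u⟫ - (δ - h)) ^ 2 := norm_sub_smul_sq_of_norm_eq_one hu z _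
  have hG : G ^ 2 = v ^ 2 + (⟪z, u⟫ - (δ + h)) ^ 2 := norm_sub_smul_sq_of_norm_eq_one hu z _
  have hδ0 : 0 ≤ δ := le_trans (by positivity) hδ
  have hv : 0 ≤ v := norm_nonneg _
  have hvG : v ≤ G := by
    refine le_of_pow_le_pow_left₀ two_ne_zero (norm_nonneg _) ?_
    nlinarith
  -- `g ^ 2 - G ^ 2 = 4 h (⟪z, u⟫ - δ) < 4 h ε v ≤ 2 δ G`
  have hgG : g ^ 2 < G ^ 2 + 2 * δ * G := by
    nlinarith [mul_lt_mul_of_pos_left hlt (by positivity : 0 < 4 * h),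
      mul_le_mul_of_nonneg_right hδ hv, mul_le_mul_of_nonneg_left hvG hδ0]
  have hGpos : 0 < G := by
    by_contra! hG0
    have : G = 0 := le_antisymm hG0 (norm_nonneg _)
    rw [this] at hgG
    nlinarith
  refine max_lt ?_ hGpos
  have : g < G + δ := by
    refine lt_of_pow_lt_pow_left₀ 2 (by positivity) ?_
    nlinarith
  linarith

end Geometry

section KMeans

variable {d n k : ℕ}

theorem kmeansCost_le_sum_norm_sub_sq (x : Fin n → EuclideanSpace ℝ (Fin d)) (c : Fin n → Fin k)
    (m : Fin k → EuclideanSpace ℝ (Fin d)) : kmeansCost x c ≤ ∑ l, ‖x l - m (c l)‖ ^ 2 := by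
  rw [kmeansCost, ← sum_fiberwise univ c, ← sum_fiberwise univ c]
  refine sum_le_sum fun j _ => ?_
  calc ∑ l ∈ univ.filter (fun l => c l = j), ‖x l - clusterMean x c (c l)‖ ^ 2
      = ∑ l ∈ univ.filter (fun l => c l = j), ‖x l - clusterMean x c j‖ ^ 2 :=
        sum_congr rfl fun l hl => by rw [(mem_filter.1 hl).2]
    _ ≤ ∑ l ∈ univ.filter (fun l => c l = j), ‖x l - m j‖ ^ 2 := sum_norm_sub_mean_sq_le _ _ _
    _ = ∑ l ∈ univ.filter (fun l => c l = j), ‖x l - m (c l)‖ ^ 2 :=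
        sum_congr rfl fun l hl => by rw [(mem_filter.1 hl).2]

theorem not_isOptimalClustering_of_norm_sub_clusterMean_lt
    {x : Fin n → EuclideanSpace ℝ (Fin d)} {c : Fin n → Fin k} {a : Fin n} {j : Fin k}
    (hlt : ‖x a - clusterMean x c j‖ < ‖x a - clusterMean x c (c a)‖) :
    ¬ IsOptimalClustering x c := by
  intro hopt
  have hcost : ∑ l, ‖x l - clusterMean x c (Function.update c a j l)‖ ^ 2 < kmeansCost x c := by
    refine sum_lt_sum (fun l _ => ?_) ⟨a, mem_univ a, ?_⟩
    · rcases eq_or_ne l a with rfl | hl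
      · simpa using pow_le_pow_left₀ (norm_nonneg _) hlt.le 2
      · rw [Function.update_of_ne hl]
    · simpa using pow_lt_pow_left₀ hlt (norm_nonneg _) two_ne_zero
  exact ((hopt _).trans (kmeansCost_le_sum_norm_sub_sq x _ _)).not_gt hcost

theorem exists_ne_eq_of_one_lt_card_filter {c : Fin n → Fin k} {a : Fin n}
    (h : 1 < #(univ.filter fun l => c l = c a)) : ∃ l ≠ a, c l = c a := by
  obtain ⟨l, hl, hla⟩ := (one_lt_card_iff_nontrivial.1 h).exists_ne a
  exact ⟨l, hla, (mem_filter.1 hl).2⟩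

theorem clusterMean_add (x t : Fin n → EuclideanSpace ℝ (Fin d)) (c : Fin n → Fin k) (j : Fin k) :
    clusterMean (x + t) c j = clusterMean x c j + clusterMean t c j := by
  simp only [clusterMean, Pi.add_apply, sum_add_distrib, smul_add]

theorem clusterMean_eq_of_forall_eq {t : Fin n → EuclideanSpace ℝ (Fin d)} {c : Fin n → Fin k}
    {j : Fin k} {q : EuclideanSpace ℝ (Fin d)} (hj : ∃ l, c l = j) (ht : ∀ l, c l = j → t l = q) :
    clusterMean t c j = q := by
  obtain ⟨l, hl⟩ := hj
  rw [clusterMean, sum_congr rfl fun l hl => ht l (mem_filter.1 hl).2, sum_const,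
    ← Nat.cast_smul_eq_nsmul ℝ, inv_smul_smul₀]
  exact Nat.cast_ne_zero.2 (card_ne_zero.2 ⟨l, by simp [hl]⟩)

end KMeans

section APS

variable {d n k : ℕ} {ε D : ℝ} {x : Fin n → EuclideanSpace ℝ (Fin d)} {c : Fin n → Fin k}

/-- Perturbation: `x a` moves by `τ`, the rest of its cluster by `-τ/(m-1)` so that its mean stays
put, and cluster `j` by a common step of length `≤ ε D` towards `x a + τ`. -/
theorem IsAPS.norm_sub_clusterMean_le_max (haps : IsAPS ε D x c) {a : Fin n} {j : Fin k}
    (hj : c a ≠ j) (hi : ∃ l ≠ a, c l = c a) (hj' : ∃ l, c l = j)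
    {τ : EuclideanSpace ℝ (Fin d)} (hτ : ‖τ‖ ≤ ε * D) :
    ‖x a + τ - clusterMean x c (c a)‖ ≤ max (‖x a + τ - clusterMean x c j‖ - ε * D) 0 := by
  by_contra! hlt
  obtain ⟨q, hq, hqA⟩ := exists_norm_le_norm_sub_le_max (x a + τ - clusterMean x c j)
    ((norm_nonneg τ).trans hτ)
  set S := univ.filter (fun l => c l = c a)
  have hS : (S.erase a).Nonempty := by
    obtain ⟨l, hla, hl⟩ := hi
    exact ⟨l, mem_erase.2 ⟨hla, mem_filter.2 ⟨mem_univ l, hl⟩⟩⟩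
  set m : ℝ := ((S.erase a).card : ℝ)
  have hm : 1 ≤ m := Nat.one_le_cast.2 hS.card_pos
  let t : Fin n → EuclideanSpace ℝ (Fin d) := fun l =>
    if l = a then τ else if c l = c a then -(m⁻¹ • τ) else if c l = j then q else 0
  have ht : ∀ l, ‖t l‖ ≤ ε * D := by
    intro l
    simp only [t]
    split_ifs
    · exact hτ
    · rw [norm_neg, norm_smul, Real.norm_of_nonneg (by positivity)]
      exact (mul_le_of_le_one_left (norm_nonneg τ) (inv_le_one_of_one_le₀ hm)).trans hτ
    · exact hq
    · exact norm_zero.trans_le ((norm_nonneg τ).trans hτ)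
  have hti : clusterMean t c (c a) = 0 := by
    have hsum : ∑ l ∈ S, t l = 0 := by
      rw [← add_sum_erase S t (mem_filter.2 ⟨mem_univ a, rfl⟩),
        sum_congr rfl fun l hl => (show t l = -(m⁻¹ • τ) by
          simp [t, ne_of_mem_erase hl, (mem_filter.1 (mem_of_mem_erase hl)).2]),
        sum_const, ← Nat.cast_smul_eq_nsmul ℝ, smul_neg, smul_inv_smul₀ (by positivity)]
      simp [t]
    rw [clusterMean, hsum, smul_zero]
  have htj : clusterMean t c j = q :=
    clusterMean_eq_of_forall_eq hj' fun l hl => by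
      simp [t, hl, hj.symm, show l ≠ a by rintro rfl; exact hj hl]
  refine not_isOptimalClustering_of_norm_sub_clusterMean_lt (a := a) (j := j) ?_
    (haps (x + t) fun l => by simpa using ht l)
  have hta : (x + t) a = x a + τ := by simp [t]
  rw [clusterMean_add, clusterMean_add, hti, htj, hta, add_zero, ← sub_sub]
  exact hqA.trans_lt hlt

theorem IsAPS.mul_norm_sub_inner_smul_le (haps : IsAPS ε D x c) (hε : 0 ≤ ε) {a : Fin n}
    {j : Fin k} (hj : c a ≠ j) (hi : ∃ l ≠ a, c l = c a) (hj' : ∃ l, c l = j)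
    {p u : EuclideanSpace ℝ (Fin d)} {h : ℝ} (hu : ‖u‖ = 1) (hh : 0 < h) (hD : 2 * h ≤ D)
    (hμi : clusterMean x c (c a) = p + h • u) (hμj : clusterMean x c j = p - h • u) :
    ε * ‖(x a - p) - ⟪x a - p, u⟫ • u‖ ≤ ⟪x a - p, u⟫ - ε * D := by
  refine le_of_not_gt fun hlt => ?_
  have hcloser := max_norm_sub_smul_sub_lt hu hh hε (by nlinarith) hlt
  have hstable := haps.norm_sub_clusterMean_le_max hj hi hj' (τ := -((ε * D) • u))
    (by rw [norm_neg, norm_smul, hu, mul_one, Real.norm_of_nonneg (by nlinarith)])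
  rw [hμi, hμj, show x a + -((ε * D) • u) - (p + h • u) = x a - p - (ε * D + h) • u by module,
    show x a + -((ε * D) • u) - (p - h • u) = x a - p - (ε * D - h) • u by module] at hstable
  exact hstable.not_gt hcloser

end APS

open Classical in
theorem aps_margin_angular_separation_general {d n k : ℕ} (ε D : ℝ) (hε : 0 < ε)
    (x : Fin n → EuclideanSpace ℝ (Fin d)) (c : Fin n → Fin k)
    (hsize : ∀ j : Fin k, 4 ≤ (Finset.univ.filter (fun i => c i = j)).card)
    (hDub : ∀ i' j' : Fin k, ‖clusterMean x c i' - clusterMean x c j'‖ ≤ D)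
    (haps : IsAPS ε D x c)
    (i j : Fin k)
    (hμ : clusterMean x c i ≠ clusterMean x c j) :
    let μi := clusterMean x c i
    let μj := clusterMean x c j
    let Dij := ‖μi - μj‖
    let u := Dij⁻¹ • (μi - μj)
    let p := (2 : ℝ)⁻¹ • (μi + μj)
    ∀ l : Fin n, (c l = i ∨ c l = j) →
      ‖(x l - p) - ⟪x l - p, u⟫ • u‖ ≤ ε⁻¹ * (|⟪x l - p, u⟫| - ε * Dij) := by
  intro μi μj Dij u p l hl
  have hij : i ≠ j := fun h => hμ (h ▸ rfl)
  have hDij : 0 < Dij := norm_pos_iff.2 (sub_ne_zero.2 hμ)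
  have hu : ‖u‖ = 1 := by
    rw [norm_smul, norm_inv, norm_norm, inv_mul_cancel₀ hDij.ne']
  have hhu : (Dij / 2) • u = (2 : ℝ)⁻¹ • (μi - μj) := by
    simp only [u, smul_smul]
    congr 1
    field_simp
  have hh : 0 < Dij / 2 := half_pos hDij
  have hD : 2 * (Dij / 2) ≤ D := by linarith [hDub i j]
  have hsplit : ∀ a : Fin n, ∃ l ≠ a, c l = c a := fun a =>
    exists_ne_eq_of_one_lt_card_filter (by linarith [hsize (c a)])
  have hne : ∀ j, ∃ l, c l = j := fun j => by
    obtain ⟨l, hl⟩ := card_pos.1 (by linarith [hsize j])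
    exact ⟨l, (mem_filter.1 hl).2⟩
  have hfinish : ∀ σ ≤ |⟪x l - p, u⟫|, ε * ‖(x l - p) - ⟪x l - p, u⟫ • u‖ ≤ σ - ε * D →
      ‖(x l - p) - ⟪x l - p, u⟫ • u‖ ≤ ε⁻¹ * (|⟪x l - p, u⟫| - ε * Dij) := by
    intro σ hσ hle
    rw [le_inv_mul_iff₀ hε]
    linarith [mul_le_mul_of_nonneg_left hD hε.le]
  rcases hl with hl | hl
  · refine hfinish _ (le_abs_self _) (haps.mul_norm_sub_inner_smul_le hε.le (hl ▸ hij) (hsplit l)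
      (hne j) hu hh hD ?_ ?_)
    · rw [hl, hhu]; module
    · rw [hhu]; module
  · have hneg := haps.mul_norm_sub_inner_smul_le hε.le (hl ▸ hij.symm) (hsplit l) (hne i)
      (p := p) (u := -u) (by rwa [norm_neg]) hh hD (by rw [hl, smul_neg, hhu]; module)
      (by rw [smul_neg, hhu]; module)
    simp only [inner_neg_right, neg_smul, smul_neg, neg_neg] at hneg
    exact hfinish _ (neg_le_abs _) hneg

open Classical in
/-- In an `ε`-APS `k`-means instance, for two clusters `C_i, C_j` and any point
`x ∈ C_i ∪ C_j`: `‖(x−p)_{(V)}‖ ≤ (1/ε)(‖(x−p)_{(u)}‖ − ε·D_{i,j})`. -/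
theorem aps_margin_angular_separation {d n k : ℕ} (ε D : ℝ) (hε : 0 < ε)
    (x : Fin n → EuclideanSpace ℝ (Fin d)) (c : Fin n → Fin k)
    (hsize : ∀ j : Fin k, 4 ≤ (Finset.univ.filter (fun i => c i = j)).card)
    (hopt : IsUniqueOptimalClustering x c)
    (hDub : ∀ i' j' : Fin k, ‖clusterMean x c i' - clusterMean x c j'‖ ≤ D)
    (hDeq : ∃ i' j' : Fin k, i' ≠ j' ∧ D = ‖clusterMean x c i' - clusterMean x c j'‖)
    (haps : IsAPS ε D x c)
    (i j : Fin k) (hij : i ≠ j)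
    (hμ : clusterMean x c i ≠ clusterMean x c j) :
    let μi := clusterMean x c i
    let μj := clusterMean x c j
    let Dij := ‖μi - μj‖
    let u := Dij⁻¹ • (μi - μj)
    let p := (2 : ℝ)⁻¹ • (μi + μj)
    ∀ l : Fin n, (c l = i ∨ c l = j) →
      ‖(x l - p) - ⟪x l - p, u⟫ • u‖ ≤ ε⁻¹ * (|⟪x l - p, u⟫| - ε * Dij) :=
  aps_margin_angular_separation_general ε D hε x c hsize hDub haps i j hμ
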